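/- Let 𝒜_k = { (φ₁,…,φ_k) : φ_i : V → [0,1], Σᵢ φ_i = 1 }. The relaxed energy Λ^α_k(φ₁,…,φ_k) = Σᵢ λ^α(φ_i) is a concave function on the convex set 𝒜_k, and hence attains its minimum over 𝒜_k at an extreme point, i.e., at a tuple of indicator functions of a k-partition of V. -/

import Mathlib

open Finset

/-- Dirichlet energy (gradient) form: `(1/2) ∑_{i,j} w_{ij} (ψ_i - ψ_j)²`. -/
noncomputable def gradE {n : ℕ} (w : Fin n → Fin n → ℝ) (ψ : Fin n → ℝ) : ℝ :=
  (1 / 2) * ∑ i, ∑ j, w i j * (ψ i - ψ j) ^ 2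

/-- Weighted squared norm `∑ i, d_i^r ψ_i²`. -/
noncomputable def dnorm {n : ℕ} (d : Fin n → ℝ) (r : ℝ) (ψ : Fin n → ℝ) : ℝ :=
  ∑ i, Real.rpow (d i) r * ψ i ^ 2

/-- First Dirichlet eigenvalue of the subset `S`. -/
noncomputable def dirEig {n : ℕ} (w : Fin n → Fin n → ℝ) (d : Fin n → ℝ) (r : ℝ)
    (S : Finset (Fin n)) : ℝ :=
  sInf { e : ℝ | ∃ ψ : Fin n → ℝ, (∀ i, i ∉ S → ψ i = 0) ∧ dnorm d r ψ = 1 ∧ e = gradE w ψ }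

/-- Relaxed eigenvalue `λ^α(φ)`. -/
noncomputable def lamAlpha {n : ℕ} (w : Fin n → Fin n → ℝ) (d : Fin n → ℝ) (r α : ℝ)
    (φ : Fin n → ℝ) : ℝ :=
  sInf { e : ℝ | ∃ ψ : Fin n → ℝ, dnorm d r ψ = 1 ∧
    e = gradE w ψ + α * ∑ i, Real.rpow (d i) r * (1 - φ i) * ψ i ^ 2 }

/-- Graph Laplacian `Δ_r = D^{-r}(D - W)` applied to `ψ` at vertex `i`. -/
noncomputable def lapApply {n : ℕ} (w : Fin n → Fin n → ℝ) (d : Fin n → ℝ) (r : ℝ)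
    (ψ : Fin n → ℝ) (i : Fin n) : ℝ :=
  Real.rpow (d i) (-r) * (d i * ψ i - ∑ j, w i j * ψ j)

/-- Indicator function of a vertex subset. -/
def ind {n : ℕ} (S : Finset (Fin n)) : Fin n → ℝ := fun i => if i ∈ S then 1 else 0

/-- The admissible class `𝒜_k`. -/
def memA {k n : ℕ} (Φ : Fin k → Fin n → ℝ) : Prop :=
  (∀ i v, 0 ≤ Φ i v ∧ Φ i v ≤ 1) ∧ ∀ v, ∑ i, Φ i v = 1

/-- The relaxed partition energy `Λ^α_k`. -/
noncomputable def LamK {k n : ℕ} (w : Fin n → Fin n → ℝ) (d : Fin n → ℝ) (r α : ℝ)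
    (Φ : Fin k → Fin n → ℝ) : ℝ :=
  ∑ i, lamAlpha w d r α (Φ i)

/-- The weighted graph is connected. -/
def gconn {n : ℕ} (w : Fin n → Fin n → ℝ) : Prop :=
  ∀ i j : Fin n, Relation.ReflTransGen (fun a b => 0 < w a b) i j

/-! `λ^α(φ)` is the infimum, over normalized `ψ`, of an energy that is affine in `φ`; on
`{φ ≤ 1}` these energies are nonnegative, so the infimum is finite and concave in `φ`, and
`Λ^α_k` is concave as a sum of such functions. After transposing, `𝒜_k` is a product of
standard simplices, i.e. the convex hull of the partition indicators, and a concave function is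
minimised over a convex hull at one of its generators; a best one among the finitely many
partitions is then a global minimiser. -/

theorem concaveOn_ciInf {ι E : Type*} [AddCommGroup E] [Module ℝ E] {s : Set E}
    (hs : Convex ℝ s) {f : ι → E → ℝ} (hf : ∀ i, ConcaveOn ℝ s (f i))
    (hbdd : ∀ x ∈ s, BddBelow (Set.range fun i => f i x)) :
    ConcaveOn ℝ s fun x => ⨅ i, f i x := by
  refine ⟨hs, fun x hx y hy a b ha hb hab => ?_⟩
  rcases isEmpty_or_nonempty ι with hι | hι
  · simp [Real.iInf_of_isEmpty]
  · refine le_ciInf fun i => le_trans ?_ ((hf i).2 hx hy ha hb hab)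
    exact add_le_add (smul_le_smul_of_nonneg_left (ciInf_le (hbdd x hx) i) ha)
      (smul_le_smul_of_nonneg_left (ciInf_le (hbdd y hy) i) hb)

section RelaxedEnergy

variable {n : ℕ} (w : Fin n → Fin n → ℝ) (d : Fin n → ℝ) (r α : ℝ)

noncomputable def relaxedEnergy (ψ φ : Fin n → ℝ) : ℝ :=
  gradE w ψ + α * ∑ i, Real.rpow (d i) r * (1 - φ i) * ψ i ^ 2

theorem lamAlpha_eq_iInf (φ : Fin n → ℝ) :
    lamAlpha w d r α φ = ⨅ ψ : {ψ : Fin n → ℝ // dnorm d r ψ = 1}, relaxedEnergy w d r α ψ φ := by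
  rw [lamAlpha, iInf]
  congr 1
  ext e
  simp [relaxedEnergy, eq_comm]

theorem relaxedEnergy_concaveOn (ψ : Fin n → ℝ) :
    ConcaveOn ℝ Set.univ (relaxedEnergy w d r α ψ) := by
  refine ⟨convex_univ, fun φ _ φ' _ a b _ _ hab => le_of_eq ?_⟩
  obtain rfl : b = 1 - a := by linarith
  simp only [relaxedEnergy, smul_eq_mul, Pi.add_apply, Pi.smul_apply]
  have hsplit : ∀ i, Real.rpow (d i) r * (1 - (a * φ i + (1 - a) * φ' i)) * ψ i ^ 2 =
      a * (Real.rpow (d i) r * (1 - φ i) * ψ i ^ 2) +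
        (1 - a) * (Real.rpow (d i) r * (1 - φ' i) * ψ i ^ 2) := fun i => by ring
  rw [sum_congr rfl fun i _ => hsplit i, sum_add_distrib, ← mul_sum, ← mul_sum]
  ring

theorem gradE_nonneg (hnn : ∀ i j, 0 ≤ w i j) (ψ : Fin n → ℝ) : 0 ≤ gradE w ψ :=
  mul_nonneg (by norm_num) (sum_nonneg fun i _ => sum_nonneg fun j _ =>
    mul_nonneg (hnn i j) (sq_nonneg _))

theorem relaxedEnergy_nonneg (hnn : ∀ i j, 0 ≤ w i j) (hd : ∀ i, 0 ≤ d i) (hα : 0 ≤ α)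
    (ψ : Fin n → ℝ) {φ : Fin n → ℝ} (hφ : φ ≤ 1) : 0 ≤ relaxedEnergy w d r α ψ φ :=
  add_nonneg (gradE_nonneg w hnn ψ) (mul_nonneg hα (sum_nonneg fun i _ =>
    mul_nonneg (mul_nonneg (Real.rpow_nonneg (hd i) r) (sub_nonneg.2 (hφ i))) (sq_nonneg _)))

theorem lamAlpha_concaveOn (hnn : ∀ i j, 0 ≤ w i j) (hd : ∀ i, 0 ≤ d i) (hα : 0 ≤ α) :
    ConcaveOn ℝ (Set.Iic 1) (lamAlpha w d r α) := by
  simp only [funext (lamAlpha_eq_iInf w d r α)]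
  refine concaveOn_ciInf (convex_Iic 1)
    (fun ψ => (relaxedEnergy_concaveOn w d r α ψ).subset (Set.subset_univ _) (convex_Iic 1))
    fun φ hφ => ⟨0, ?_⟩
  rintro _ ⟨ψ, rfl⟩
  exact relaxedEnergy_nonneg w d r α hnn hd hα ψ hφ

theorem LamK_concaveOn {k : ℕ} (hnn : ∀ i j, 0 ≤ w i j) (hd : ∀ i, 0 ≤ d i) (hα : 0 ≤ α) :
    ConcaveOn ℝ (Set.Iic (1 : Fin k → Fin n → ℝ)) (LamK w d r α) := by
  refine ⟨convex_Iic 1, fun Φ hΦ Ψ hΨ a b ha hb hab => ?_⟩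
  simp only [LamK, smul_eq_mul, mul_sum, ← sum_add_distrib]
  exact sum_le_sum fun i _ => (lamAlpha_concaveOn w d r α hnn hd hα).2 (hΦ i) (hΨ i) ha hb hab

end RelaxedEnergy

section Partitions

variable {k n : ℕ}

theorem memA.le_one {Φ : Fin k → Fin n → ℝ} (hΦ : memA Φ) : Φ ≤ 1 :=
  fun i v => (hΦ.1 i v).2

theorem memA_partitionIndicator (ℓ : Fin n → Fin k) :
    memA fun i v => if ℓ v = i then (1 : ℝ) else 0 := by
  refine ⟨fun i v => by dsimp only; split_ifs <;> norm_num, fun v => ?_⟩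
  simp

theorem memA.mem_convexHull {Φ : Fin k → Fin n → ℝ} (hΦ : memA Φ) :
    Φ ∈ convexHull ℝ (Set.range fun (ℓ : Fin n → Fin k) i v => if ℓ v = i then (1 : ℝ) else 0) := by
  have htranspose : IsLinearMap ℝ fun (X : Fin n → Fin k → ℝ) i v => X v i :=
    ⟨fun _ _ => rfl, fun _ _ => rfl⟩
  have hΦT : (fun v i => Φ i v) ∈ convexHull ℝ
      (Set.univ.pi fun _ : Fin n => Set.range fun j i : Fin k => if j = i then (1 : ℝ) else 0) := by
    rw [convexHull_pi, convexHull_basis_eq_stdSimplex]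
    exact fun v _ => ⟨fun i => (hΦ.1 i v).1, hΦ.2 v⟩
  have hΦ' := Set.mem_image_of_mem (fun (X : Fin n → Fin k → ℝ) i v => X v i) hΦT
  rw [htranspose.image_convexHull] at hΦ'
  refine convexHull_mono ?_ hΦ'
  rintro _ ⟨X, hX, rfl⟩
  choose ℓ hℓ using fun v => hX v (Set.mem_univ v)
  exact ⟨ℓ, by funext i v; simp [← hℓ v]⟩

end Partitions

theorem LamK_concave_min_at_indicator_general
    (n k : ℕ) (hk : 0 < k)
    (w : Fin n → Fin n → ℝ)
    (hnn : ∀ i j, 0 ≤ w i j)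
    (r : ℝ)
    (d : Fin n → ℝ) (hdpos : ∀ i, 0 < d i)
    (α : ℝ) (hα : 0 < α) :
    (∀ Φ Ψ : Fin k → Fin n → ℝ, memA Φ → memA Ψ → ∀ t : ℝ, t ∈ Set.Icc (0 : ℝ) 1 →
      t * LamK w d r α Φ + (1 - t) * LamK w d r α Ψ ≤
        LamK w d r α (fun i v => t * Φ i v + (1 - t) * Ψ i v)) ∧
    (∃ ℓ : Fin n → Fin k,
      memA (fun i v => if ℓ v = i then (1 : ℝ) else 0) ∧
      ∀ Φ : Fin k → Fin n → ℝ, memA Φ →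
        LamK w d r α (fun i v => if ℓ v = i then (1 : ℝ) else 0) ≤ LamK w d r α Φ) := by
  have hconc := LamK_concaveOn (k := k) w d r α hnn (fun i => (hdpos i).le) hα.le
  refine ⟨fun Φ Ψ hΦ hΨ t ht =>
    hconc.2 hΦ.le_one hΨ.le_one ht.1 (sub_nonneg.2 ht.2) (add_sub_cancel t 1), ?_⟩
  obtain ⟨L, -, hL⟩ := exists_min_image univ
    (fun ℓ : Fin n → Fin k => LamK w d r α fun i v => if ℓ v = i then (1 : ℝ) else 0)
    ⟨fun _ => ⟨0, hk⟩, mem_univ _⟩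
  refine ⟨L, memA_partitionIndicator L, fun Φ hΦ => ?_⟩
  obtain ⟨_, ⟨ℓ, rfl⟩, hℓ⟩ := hconc.exists_le_of_mem_convexHull
    (Set.range_subset_iff.2 fun ℓ => (memA_partitionIndicator ℓ).le_one) hΦ.mem_convexHull
  exact (hL ℓ (mem_univ ℓ)).trans hℓ

/-- `Λ^α_k` is concave on the convex set `𝒜_k` and attains its minimum at
a tuple of indicator functions of a `k`-partition of `V`. -/
theorem LamK_concave_min_at_indicator
    (n k : ℕ) (hk : 0 < k)
    (w : Fin n → Fin n → ℝ)
    (hsym : ∀ i j, w i j = w j i) (hnn : ∀ i j, 0 ≤ w i j)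
    (r : ℝ) (hr : r ∈ Set.Icc (0 : ℝ) 1)
    (d : Fin n → ℝ) (hd : ∀ i, d i = ∑ j, w i j) (hdpos : ∀ i, 0 < d i)
    (α : ℝ) (hα : 0 < α) :
    (∀ Φ Ψ : Fin k → Fin n → ℝ, memA Φ → memA Ψ → ∀ t : ℝ, t ∈ Set.Icc (0 : ℝ) 1 →
      t * LamK w d r α Φ + (1 - t) * LamK w d r α Ψ ≤
        LamK w d r α (fun i v => t * Φ i v + (1 - t) * Ψ i v)) ∧
    (∃ ℓ : Fin n → Fin k,
      memA (fun i v => if ℓ v = i then (1 : ℝ) else 0) ∧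
      ∀ Φ : Fin k → Fin n → ℝ, memA Φ →
        LamK w d r α (fun i v => if ℓ v = i then (1 : ℝ) else 0) ≤ LamK w d r α Φ) :=
  LamK_concave_min_at_indicator_general n k hk w hnn r d hdpos α hα
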